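/- arXiv:2205.11752 — 3 statements merged into one kernel-verified Lean document; each statement's English description precedes it below -/
import Mathlib

section
/- For every positive integer k there exists a constant C_k > 0 such that for all t > 0, ∫_0^∞ |∂^k/∂t^k [ (t/(2√π)) s^{−3/2} e^{−t²/(4s)} ]| ds ≤ C_k / t^k. -/
/-!
Writing `y = t / √(2s)`, the density is `s⁻¹ h(y) / √(2π)` with `h(y) = y e^{-y²/2}`, so its `k`-th
`t`-derivative is `s⁻¹ (2s)^{-k/2} h⁽ᵏ⁾(y) / √(2π)`. Since `ds/s = 2 dy/y` and `(2s)^{-1/2} = y/t`, the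
`s`-integral equals exactly `C_k / t^k` with `C_k = (2/√(2π)) ∫₀^∞ y^{k-1} |h⁽ᵏ⁾(y)| dy`. As
`h⁽ᵏ⁾ = (-1)ᵏ He_{k+1} e^{-y²/2}`, this constant is finite, and positive because `He_{k+1} ≠ 0`.
-/

open Real MeasureTheory Set Polynomial

theorem integral_Ioi_inv_smul_comp_mul_rpow {E : Type*} [NormedAddCommGroup E] [NormedSpace ℝ E]
    (F : ℝ → E) {a p : ℝ} (ha : 0 < a) (hp : p ≠ 0) :
    ∫ s in Ioi 0, s⁻¹ • F (a * s ^ p) = |p|⁻¹ • ∫ u in Ioi 0, u⁻¹ • F u := by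
  have hpow := integral_comp_rpow_Ioi (fun y => y⁻¹ • F (a * y)) hp
  have hmul := integral_comp_mul_left_Ioi (fun u => u⁻¹ • F u) 0 ha
  rw [mul_zero] at hmul
  have hlhs : ∫ s in Ioi 0, (|p| * s ^ (p - 1)) • (s ^ p)⁻¹ • F (a * s ^ p)
      = |p| • ∫ s in Ioi 0, s⁻¹ • F (a * s ^ p) := by
    rw [← integral_smul]
    refine setIntegral_congr_fun measurableSet_Ioi fun s (hs : 0 < s) => ?_
    rw [smul_smul, smul_smul, rpow_sub_one hs.ne', ← rpow_neg hs.le, mul_assoc,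
      div_mul_eq_mul_div, ← rpow_add hs, add_neg_cancel, rpow_zero, one_div]
  have hrhs : ∫ y in Ioi 0, y⁻¹ • F (a * y) = a • ∫ y in Ioi 0, (a * y)⁻¹ • F (a * y) := by
    rw [← integral_smul]
    refine setIntegral_congr_fun measurableSet_Ioi fun y (hy : 0 < y) => ?_
    rw [smul_smul, mul_inv, ← mul_assoc, mul_inv_cancel₀ ha.ne', one_mul]
  rw [hlhs, hrhs, hmul, smul_smul, mul_inv_cancel₀ ha.ne', one_smul] at hpow
  rw [← hpow, smul_smul, inv_mul_cancel₀ (abs_ne_zero.mpr hp), one_smul]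

theorem Polynomial.integrable_eval_mul_exp_neg_mul_sq (P : ℝ[X]) {b : ℝ} (hb : 0 < b) :
    Integrable fun x => P.eval x * exp (-b * x ^ 2) := by
  simp_rw [eval_eq_sum_range, Finset.sum_mul]
  refine integrable_finsetSum _ fun i _ => ?_
  simpa [rpow_natCast, mul_assoc] using
    (integrable_rpow_mul_exp_neg_mul_sq hb (neg_one_lt_zero.trans_le i.cast_nonneg)).const_mul
      (P.coeff i)

theorem Polynomial.exists_gt_eval_ne_zero {P : ℝ[X]} (hP : P ≠ 0) (a : ℝ) :
    ∃ x, a < x ∧ P.eval x ≠ 0 :=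
  (Ioi_infinite a).exists_notMem_finite (finite_setOfPred_isRoot hP)

theorem contDiff_mul_exp_neg_sq_div_two : ContDiff ℝ ⊤ fun y : ℝ => y * exp (-(y ^ 2 / 2)) := by
  fun_prop

/-- `y e^{-y²/2}` is minus the derivative of the Gaussian, whose derivatives are Hermite. -/
theorem iteratedDeriv_mul_exp_neg_sq_div_two (k : ℕ) (x : ℝ) :
    iteratedDeriv k (fun y => y * exp (-(y ^ 2 / 2))) x
      = (-1) ^ k * aeval x (hermite (k + 1)) * exp (-(x ^ 2 / 2)) := by
  have hderiv : deriv (fun y => exp (-(y ^ 2 / 2))) = fun y => -(y * exp (-(y ^ 2 / 2))) := by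
    funext y
    have h : HasDerivAt (fun y => -(y ^ 2 / 2)) (-y) y := by
      simpa using ((hasDerivAt_pow 2 y).div_const 2).fun_neg
    rw [h.exp.deriv]
    ring
  have hneg : (fun y => y * exp (-(y ^ 2 / 2)))
      = fun y => -deriv (fun y => exp (-(y ^ 2 / 2))) y := by
    simp [hderiv]
  rw [hneg, iteratedDeriv_fun_neg, iteratedDeriv_eq_iterate, ← Function.iterate_succ_apply,
    deriv_gaussian_eq_hermite_mul_gaussian, pow_succ]
  ring

theorem abs_iteratedDeriv_mul_exp_neg_sq_div_two (k : ℕ) (x : ℝ) :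
    |iteratedDeriv k (fun y => y * exp (-(y ^ 2 / 2))) x|
      = |((hermite (k + 1)).map (algebraMap ℤ ℝ)).eval x| * exp (-(1 / 2) * x ^ 2) := by
  rw [iteratedDeriv_mul_exp_neg_sq_div_two, eval_map_algebraMap, abs_mul, abs_mul,
    abs_pow, abs_neg, abs_one, one_pow, one_mul, abs_of_pos (exp_pos _)]
  ring_nf

theorem integrableOn_pow_mul_abs_iteratedDeriv_mul_exp_neg_sq_div_two (k m : ℕ) :
    IntegrableOn (fun u => u ^ m * |iteratedDeriv k (fun y => y * exp (-(y ^ 2 / 2))) u|)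
      (Ioi 0) := by
  refine ((integrable_eval_mul_exp_neg_mul_sq (X ^ m * (hermite (k + 1)).map (algebraMap ℤ ℝ))
    (by norm_num : (0 : ℝ) < 1 / 2)).abs.integrableOn).congr_fun
    (fun u (hu : 0 < u) => ?_) measurableSet_Ioi
  simp only
  rw [abs_iteratedDeriv_mul_exp_neg_sq_div_two, eval_mul, eval_pow, eval_X, abs_mul, abs_mul,
    abs_pow, abs_of_pos hu, abs_of_pos (exp_pos _), mul_assoc]

theorem integral_pow_mul_abs_iteratedDeriv_mul_exp_neg_sq_div_two_pos (k m : ℕ) :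
    0 < ∫ u in Ioi 0, u ^ m * |iteratedDeriv k (fun y => y * exp (-(y ^ 2 / 2))) u| := by
  set f := fun u => u ^ m * |iteratedDeriv k (fun y => y * exp (-(y ^ 2 / 2))) u|
  have hcont : Continuous f :=
    (continuous_pow m).mul (contDiff_mul_exp_neg_sq_div_two.continuous_iteratedDeriv k
      (by exact_mod_cast le_top)).abs
  have hnonneg : 0 ≤ᵐ[volume.restrict (Ioi 0)] f := by
    filter_upwards [ae_restrict_mem measurableSet_Ioi] with u (hu : 0 < u)
    positivity
  obtain ⟨u, hu, hHu⟩ := exists_gt_eval_ne_zero ((hermite_monic (k + 1)).map _).ne_zero 0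
  have hfu : f u ≠ 0 := by
    simp only [f]
    rw [abs_iteratedDeriv_mul_exp_neg_sq_div_two]
    exact mul_ne_zero (pow_ne_zero m hu.ne') (mul_ne_zero (abs_ne_zero.mpr hHu) (exp_pos _).ne')
  rw [setIntegral_pos_iff_support_of_nonneg_ae hnonneg
    (integrableOn_pow_mul_abs_iteratedDeriv_mul_exp_neg_sq_div_two k m)]
  exact (hcont.isOpen_support.inter isOpen_Ioi).measure_pos volume ⟨u, hfu, hu⟩

theorem iteratedDeriv_oneSidedStable_density (k : ℕ) {s : ℝ} (hs : 0 < s) (t : ℝ) :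
    iteratedDeriv k (fun τ => τ / (2 * √π) * s ^ (-(3 : ℝ) / 2) * exp (-τ ^ 2 / (4 * s))) t
      = (√(2 * π))⁻¹ * s⁻¹ * (√(2 * s))⁻¹ ^ k *
          iteratedDeriv k (fun y => y * exp (-(y ^ 2 / 2))) ((√(2 * s))⁻¹ * t) := by
  have hs32 : s ^ (-(3 : ℝ) / 2) = (s * √s)⁻¹ := by
    rw [sqrt_eq_rpow, ← rpow_one_add' hs.le (by norm_num), ← rpow_neg hs.le]
    norm_num
  have hsq2 : √2 ^ 2 = 2 := sq_sqrt zero_le_two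
  have hsqs : √s ^ 2 = s := sq_sqrt hs.le
  have hscaled : (fun τ => τ / (2 * √π) * s ^ (-(3 : ℝ) / 2) * exp (-τ ^ 2 / (4 * s)))
      = fun τ => (√(2 * π))⁻¹ * s⁻¹ *
          ((√(2 * s))⁻¹ * τ * exp (-(((√(2 * s))⁻¹ * τ) ^ 2 / 2))) := by
    funext τ
    rw [hs32, sqrt_mul zero_le_two, sqrt_mul zero_le_two, mul_pow, inv_pow, mul_pow, hsq2, hsqs]
    field_simp
    ring_nf
    rw [hsq2]
  rw [hscaled, iteratedDeriv_const_mul_field,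
    iteratedDeriv_comp_const_mul (contDiff_mul_exp_neg_sq_div_two.of_le le_top)]
  ring

theorem integral_abs_iteratedDeriv_oneSidedStable {k : ℕ} (hk : 1 ≤ k) {t : ℝ} (ht : 0 < t) :
    ∫ s in Ioi 0, |iteratedDeriv k
        (fun τ => τ / (2 * √π) * s ^ (-(3 : ℝ) / 2) * exp (-τ ^ 2 / (4 * s))) t|
      = 2 / √(2 * π) *
          (∫ u in Ioi 0, u ^ (k - 1) * |iteratedDeriv k (fun y => y * exp (-(y ^ 2 / 2))) u|) /
          t ^ k := by
  set g : ℝ → ℝ := fun u => |iteratedDeriv k (fun y => y * exp (-(y ^ 2 / 2))) u|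
  set F : ℝ → ℝ := fun u => (√(2 * π))⁻¹ * (u / t) ^ k * g u
  have hscale : ∀ s ∈ Ioi (0 : ℝ), (√(2 * s))⁻¹ * t = t / √2 * s ^ (-(1 / 2) : ℝ) := by
    intro s (hs : 0 < s)
    rw [sqrt_mul zero_le_two, rpow_neg hs.le, ← sqrt_eq_rpow]
    ring
  calc ∫ s in Ioi 0, |iteratedDeriv k
          (fun τ => τ / (2 * √π) * s ^ (-(3 : ℝ) / 2) * exp (-τ ^ 2 / (4 * s))) t|
      = ∫ s in Ioi 0, s⁻¹ • F (t / √2 * s ^ (-(1 / 2) : ℝ)) := by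
        refine setIntegral_congr_fun measurableSet_Ioi fun s hs => ?_
        have hs' : (0 : ℝ) < s := hs
        have hinv : 0 < (√(2 * s))⁻¹ := inv_pos.mpr (sqrt_pos.mpr (mul_pos two_pos hs'))
        simp only [F, g, smul_eq_mul]
        rw [iteratedDeriv_oneSidedStable_density k hs', ← hscale s hs,
          mul_div_cancel_right₀ _ ht.ne', abs_mul, abs_mul, abs_mul, abs_of_pos (inv_pos.mpr hs'),
          abs_of_pos (pow_pos hinv k), abs_of_pos (by positivity : (0 : ℝ) < (√(2 * π))⁻¹)]
        ring
    _ = |-(1 / 2 : ℝ)|⁻¹ • ∫ u in Ioi 0, u⁻¹ • F u :=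
        integral_Ioi_inv_smul_comp_mul_rpow F (by positivity) (by norm_num)
    _ = ∫ u in Ioi 0, 2 / √(2 * π) / t ^ k * (u ^ (k - 1) * g u) := by
        rw [← integral_smul]
        refine setIntegral_congr_fun measurableSet_Ioi fun u (hu : 0 < u) => ?_
        simp only [F, smul_eq_mul]
        rw [pow_sub₀ u hu.ne' hk, pow_one, div_pow]
        norm_num
        field_simp
    _ = 2 / √(2 * π) * (∫ u in Ioi 0, u ^ (k - 1) * g u) / t ^ k := by
        rw [integral_const_mul]
        ring

theorem oneSidedStable_deriv_bound (k : ℕ) (hk : 0 < k) :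
    ∃ C : ℝ, 0 < C ∧ ∀ t : ℝ, 0 < t →
      (∫ s in Set.Ioi (0 : ℝ),
        |iteratedDeriv k
          (fun τ => τ / (2 * Real.sqrt Real.pi) * s ^ (-(3 : ℝ) / 2) *
            Real.exp (-τ ^ 2 / (4 * s))) t|) ≤ C / t ^ k := by
  have hI := integral_pow_mul_abs_iteratedDeriv_mul_exp_neg_sq_div_two_pos k (k - 1)
  refine ⟨2 / √(2 * π) *
      ∫ u in Ioi 0, u ^ (k - 1) * |iteratedDeriv k (fun y => y * exp (-(y ^ 2 / 2))) u|,
    by positivity, fun t ht => ?_⟩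
  exact (integral_abs_iteratedDeriv_oneSidedStable hk ht).le
end

section
/- Bochner's subordination identity: for every a ≥ 0, (1/√π) ∫_0^∞ u^{−1/2} e^{−u} e^{−a²/(4u)} du = e^{−a}. -/
/-!
Substituting `u = x ^ 2` turns the integral into `2 ∫₀^∞ exp (-x ^ 2 - c ^ 2 / x ^ 2) dx` with
`c = a / 2`, and `-x ^ 2 - c ^ 2 / x ^ 2 = -2c - (x - c / x) ^ 2`. The Cauchy–Schlömilch substitution
`s = x - c / x` is a bijection `(0, ∞) → ℝ` with `ds = (1 + c / x ^ 2) dx`, while the inversion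
`x ↦ c / x` shows that for even `f` the parts `∫ f (x - c / x)` and `∫ (c / x ^ 2) f (x - c / x)`
agree. Hence `∫₀^∞ f (x - c / x) dx = ½ ∫_ℝ f`, and the Gaussian integral `∫_ℝ exp (-s ^ 2) = √π`
finishes the computation.
-/

open Real MeasureTheory Set

section CauchySchlomilch

variable {E : Type*} [NormedAddCommGroup E] [NormedSpace ℝ E] {c : ℝ}

lemma hasDerivWithinAt_const_div_Ioi (c : ℝ) {x : ℝ} (hx : x ∈ Ioi (0 : ℝ)) :
    HasDerivWithinAt (fun t => c / t) (-(c / x ^ 2)) (Ioi 0) x := by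
  simpa [div_eq_mul_inv] using ((hasDerivAt_inv (ne_of_gt hx)).const_mul c).hasDerivWithinAt

lemma image_const_div_Ioi (hc : 0 < c) : (fun t => c / t) '' Ioi 0 = Ioi 0 := by
  refine Subset.antisymm (image_subset_iff.2 fun x hx => div_pos hc hx) fun y hy => ?_
  exact ⟨c / y, div_pos hc hy, div_div_cancel₀ hc.ne'⟩

lemma injOn_const_div_Ioi (hc : 0 < c) : InjOn (fun t => c / t) (Ioi 0) :=
  fun _ _ _ _ h => inv_injective (mul_left_cancel₀ hc.ne' h)

lemma abs_neg_const_div_sq (hc : 0 < c) {x : ℝ} (hx : x ∈ Ioi (0 : ℝ)) :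
    |-(c / x ^ 2)| = c / x ^ 2 := by
  rw [abs_neg, abs_of_pos (div_pos hc (pow_pos hx 2))]

lemma integral_Ioi_const_div_sq_smul_comp_const_div (hc : 0 < c) (g : ℝ → E) :
    ∫ x in Ioi 0, (c / x ^ 2) • g (c / x) = ∫ x in Ioi 0, g x := by
  have h := integral_image_eq_integral_abs_deriv_smul measurableSet_Ioi
    (fun x hx => hasDerivWithinAt_const_div_Ioi c hx) (injOn_const_div_Ioi hc) g
  rw [image_const_div_Ioi hc] at h
  rw [h]
  exact setIntegral_congr_fun measurableSet_Ioi fun x hx => by rw [abs_neg_const_div_sq hc hx]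

lemma integrableOn_Ioi_const_div_sq_smul_comp_const_div_iff (hc : 0 < c) (g : ℝ → E) :
    IntegrableOn (fun x => (c / x ^ 2) • g (c / x)) (Ioi 0) ↔ IntegrableOn g (Ioi 0) := by
  have h := integrableOn_image_iff_integrableOn_abs_deriv_smul measurableSet_Ioi
    (fun x hx => hasDerivWithinAt_const_div_Ioi c hx) (injOn_const_div_Ioi hc) g
  rw [image_const_div_Ioi hc] at h
  rw [h]
  exact integrableOn_congr_fun (fun x hx => by rw [abs_neg_const_div_sq hc hx]) measurableSet_Ioi

lemma hasDerivWithinAt_sub_const_div_Ioi (c : ℝ) {x : ℝ} (hx : x ∈ Ioi (0 : ℝ)) :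
    HasDerivWithinAt (fun t => t - c / t) (1 + c / x ^ 2) (Ioi 0) x := by
  simpa only [sub_neg_eq_add, id_eq] using
    (hasDerivWithinAt_id x _).fun_sub (hasDerivWithinAt_const_div_Ioi c hx)

lemma strictMonoOn_sub_const_div (hc : 0 < c) : StrictMonoOn (fun t => t - c / t) (Ioi 0) :=
  fun _ hx _ _ hxy => sub_lt_sub hxy (div_lt_div_of_pos_left hc hx hxy)

lemma image_sub_const_div_Ioi (hc : 0 < c) : (fun t => t - c / t) '' Ioi 0 = univ := by
  refine eq_univ_of_forall fun s => ?_
  set r := √(s ^ 2 + 4 * c)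
  have hr : r ^ 2 = s ^ 2 + 4 * c := sq_sqrt (by positivity)
  have hsr : |s| < r := lt_sqrt_of_sq_lt (by rw [sq_abs]; linarith)
  have hpos : 0 < (s + r) / 2 := by linarith [neg_abs_le s]
  -- `(s + r) / 2` is the positive root of `t ^ 2 - s t - c`
  refine ⟨(s + r) / 2, hpos, ?_⟩
  have : c / ((s + r) / 2) = (s + r) / 2 - s := by
    rw [div_eq_iff hpos.ne']
    nlinarith
  simp only [this, sub_sub_cancel]

lemma abs_one_add_const_div_sq (hc : 0 < c) (x : ℝ) : |1 + c / x ^ 2| = 1 + c / x ^ 2 :=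
  abs_of_pos (by positivity)

lemma integral_Ioi_smul_comp_sub_const_div (hc : 0 < c) (f : ℝ → E) :
    ∫ x in Ioi 0, (1 + c / x ^ 2) • f (x - c / x) = ∫ x, f x := by
  have h := integral_image_eq_integral_abs_deriv_smul measurableSet_Ioi
    (fun x hx => hasDerivWithinAt_sub_const_div_Ioi c hx) (strictMonoOn_sub_const_div hc).injOn f
  rw [image_sub_const_div_Ioi hc, setIntegral_univ] at h
  simp only [h, abs_one_add_const_div_sq hc]

lemma integrableOn_Ioi_smul_comp_sub_const_div (hc : 0 < c) {f : ℝ → E} (hf : Integrable f) :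
    IntegrableOn (fun x => (1 + c / x ^ 2) • f (x - c / x)) (Ioi 0) := by
  have := (integrableOn_image_iff_integrableOn_abs_deriv_smul measurableSet_Ioi
    (fun x hx => hasDerivWithinAt_sub_const_div_Ioi c hx) (strictMonoOn_sub_const_div hc).injOn
    f).1 (by rw [image_sub_const_div_Ioi hc]; exact hf.integrableOn)
  simpa only [abs_one_add_const_div_sq hc] using this

theorem integral_Ioi_comp_sub_const_div_of_even (hc : 0 < c) {f : ℝ → E} (hf : Integrable f)
    (heven : ∀ x, f (-x) = f x) :
    ∫ x in Ioi 0, f (x - c / x) = (2 : ℝ)⁻¹ • ∫ x, f x := by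
  set F : ℝ → E := fun x => f (x - c / x)
  -- the inversion `x ↦ c / x` maps `x - c / x` to its negative
  have hF_inv : ∀ x ∈ Ioi (0 : ℝ), (c / x ^ 2) • F (c / x) = (c / x ^ 2) • F x := by
    intro x _
    simp only [F, div_div_cancel₀ hc.ne', ← heven (x - c / x), neg_sub]
  have hG := integrableOn_Ioi_smul_comp_sub_const_div hc hf
  have hF : IntegrableOn F (Ioi 0) := by
    have hbound : ∀ x : ℝ, ‖(1 + c / x ^ 2)⁻¹‖ ≤ 1 := fun x => by
      rw [norm_inv, Real.norm_of_nonneg (by positivity)]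
      exact inv_le_one_of_one_le₀ (le_add_of_nonneg_right (by positivity))
    refine IntegrableOn.congr_fun (hG.bdd_smul 1
      (by fun_prop : Measurable fun x : ℝ => (1 + c / x ^ 2)⁻¹).aestronglyMeasurable
      (ae_of_all _ hbound)) (fun x _ => ?_) measurableSet_Ioi
    exact inv_smul_smul₀ (by positivity) _
  have hF' : IntegrableOn (fun x => (c / x ^ 2) • F x) (Ioi 0) :=
    ((integrableOn_Ioi_const_div_sq_smul_comp_const_div_iff hc F).2 hF).congr_fun hF_inv
      measurableSet_Ioi
  have hF'_eq : ∫ x in Ioi 0, (c / x ^ 2) • F x = ∫ x in Ioi 0, F x := by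
    rw [← setIntegral_congr_fun measurableSet_Ioi hF_inv,
      integral_Ioi_const_div_sq_smul_comp_const_div hc]
  rw [← integral_Ioi_smul_comp_sub_const_div hc f]
  simp only [add_smul, one_smul]
  rw [integral_add hF hF', hF'_eq, ← two_smul ℝ, inv_smul_smul₀ two_ne_zero]

end CauchySchlomilch

lemma integral_Ioi_exp_neg_sq_sub_sq_div_sq {c : ℝ} (hc : 0 ≤ c) :
    ∫ x in Ioi 0, exp (-x ^ 2 - c ^ 2 / x ^ 2) = √π / 2 * exp (-(2 * c)) := by
  rcases hc.eq_or_lt with rfl | hc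
  · simpa using integral_gaussian_Ioi 1
  have h_sq : ∀ x ∈ Ioi (0 : ℝ),
      exp (-x ^ 2 - c ^ 2 / x ^ 2) = exp (-(2 * c)) * exp (-(x - c / x) ^ 2) := by
    intro x hx
    have hx0 : x ≠ 0 := ne_of_gt hx
    rw [← exp_add]
    congr 1
    field_simp
    ring
  have h_even := integral_Ioi_comp_sub_const_div_of_even hc
    (f := fun s => exp (-s ^ 2)) (by simpa using integrable_exp_neg_mul_sq one_pos)
    (fun s => by rw [neg_sq])
  have h_gauss : ∫ x, exp (-x ^ 2) = √π := by simpa using integral_gaussian 1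
  rw [setIntegral_congr_fun measurableSet_Ioi h_sq, integral_const_mul, h_even, h_gauss,
    smul_eq_mul]
  ring

theorem bochner_subordination (a : ℝ) (ha : 0 ≤ a) :
    (1 / Real.sqrt Real.pi) *
      ∫ u in Set.Ioi (0 : ℝ),
        u ^ (-(1 : ℝ) / 2) * Real.exp (-u) * Real.exp (-a ^ 2 / (4 * u)) =
      Real.exp (-a) := by
  have h_sq : ∀ x ∈ Ioi (0 : ℝ),
      (2 * x ^ ((2 : ℝ) - 1)) • ((x ^ (2 : ℝ)) ^ (-(1 : ℝ) / 2) * exp (-x ^ (2 : ℝ)) *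
        exp (-a ^ 2 / (4 * x ^ (2 : ℝ)))) = 2 * exp (-x ^ 2 - (a / 2) ^ 2 / x ^ 2) := by
    intro x hx
    have hx0 : x ≠ 0 := ne_of_gt hx
    have h_exponent : -a ^ 2 / (4 * x ^ 2) = -((a / 2) ^ 2 / x ^ 2) := by ring
    rw [← rpow_mul (le_of_lt hx), rpow_two, show (2 : ℝ) - 1 = 1 by norm_num,
      show (2 : ℝ) * (-1 / 2) = -1 by norm_num, rpow_one, rpow_neg_one, smul_eq_mul, h_exponent,
      sub_eq_add_neg, exp_add]
    field_simp
  rw [← integral_comp_rpow_Ioi_of_pos zero_lt_two, setIntegral_congr_fun measurableSet_Ioi h_sq,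
    integral_const_mul, integral_Ioi_exp_neg_sq_sub_sq_div_sq (by positivity)]
  field_simp
end

section
/- Classical Hardy inequality (second form): if f : (0,∞) → [0,∞) is measurable, p ≥ 1 and r > 0, then ∫_0^∞ (∫_x^∞ f(y) dy)^p x^{r−1} dx ≤ (p/r)^p ∫_0^∞ (y f(y))^p y^{r−1} dy. -/
open Real MeasureTheory ENNReal

/-!
Write `f = (f ^ p * w) ^ (1/p) * (w ^ (-1/(p-1))) ^ (1 - 1/p)` with `w y = y ^ ((p-1)(r/p+1))`
and apply Hölder on `(x, ∞)`. The conjugate weight `y ^ (-(r/p+1))` integrates over `(x, ∞)` to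
`(p/r) x ^ (-r/p)`, so `(∫ₓ^∞ f) ^ p x ^ (r-1) ≤ (p/r) ^ (p-1) x ^ (r/p-1) ∫ₓ^∞ f ^ p w`.
Integrating in `x` and exchanging the order of integration produces `∫₀^y x ^ (r/p-1) dx =
(p/r) y ^ (r/p)`, and `w y * y ^ (r/p) = y ^ p * y ^ (r-1)`. For `p = 1` the weight is `1` and
the same computation is an equality.
-/

theorem lintegral_rpow_le_of_holder_weights {α : Type*} [MeasurableSpace α]
    {μ : Measure α} {f u v : α → ℝ≥0∞} (hf : AEMeasurable f μ) (hu : AEMeasurable u μ)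
    (hv : AEMeasurable v μ) {p : ℝ} (hp : 1 ≤ p)
    (huv : ∀ᵐ a ∂μ, u a ^ p⁻¹ * v a ^ (1 - p⁻¹) = 1) :
    (∫⁻ a, f a ∂μ) ^ p ≤ (∫⁻ a, f a ^ p * u a ∂μ) * (∫⁻ a, v a ∂μ) ^ (p - 1) := by
  have hp0 : 0 < p := by linarith
  have hfactor : f =ᵐ[μ] fun a => (f a ^ p * u a) ^ p⁻¹ * v a ^ (1 - p⁻¹) := by
    filter_upwards [huv] with a ha
    rw [ENNReal.mul_rpow_of_nonneg _ _ (inv_nonneg.2 hp0.le), ENNReal.rpow_rpow_inv hp0.ne',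
      mul_assoc, ha, mul_one]
  have holder := lintegral_mul_norm_pow_le ((hf.pow_const p).mul hu) hv
    (inv_nonneg.2 hp0.le) (sub_nonneg.2 (inv_le_one_of_one_le₀ hp)) (add_sub_cancel _ _)
  calc (∫⁻ a, f a ∂μ) ^ p
      = (∫⁻ a, (f a ^ p * u a) ^ p⁻¹ * v a ^ (1 - p⁻¹) ∂μ) ^ p := by
        rw [lintegral_congr_ae hfactor]
    _ ≤ ((∫⁻ a, f a ^ p * u a ∂μ) ^ p⁻¹ * (∫⁻ a, v a ∂μ) ^ (1 - p⁻¹)) ^ p :=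
        ENNReal.rpow_le_rpow holder hp0.le
    _ = (∫⁻ a, f a ^ p * u a ∂μ) * (∫⁻ a, v a ∂μ) ^ (p - 1) := by
        rw [ENNReal.mul_rpow_of_nonneg _ _ hp0.le, ENNReal.rpow_inv_rpow hp0.ne',
          ← ENNReal.rpow_mul, sub_mul, one_mul, inv_mul_cancel₀ hp0.ne']

theorem lintegral_Ioi_rpow_of_lt {a x : ℝ} (ha : a < -1) (hx : 0 < x) :
    ∫⁻ y in Set.Ioi x, ENNReal.ofReal (y ^ a) = ENNReal.ofReal (-x ^ (a + 1) / (a + 1)) := by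
  rw [← ofReal_integral_eq_lintegral_ofReal (integrableOn_Ioi_rpow_of_lt ha hx)
      (by filter_upwards [ae_restrict_mem measurableSet_Ioi] with y hy
          exact Real.rpow_nonneg (hx.trans hy).le a),
    integral_Ioi_rpow_of_lt ha hx]

theorem lintegral_Ioo_zero_rpow_of_lt {a y : ℝ} (ha : -1 < a) (hy : 0 < y) :
    ∫⁻ x in Set.Ioo 0 y, ENNReal.ofReal (x ^ a) = ENNReal.ofReal (y ^ (a + 1) / (a + 1)) := by
  have hint : IntegrableOn (fun x : ℝ => x ^ a) (Set.Ioc 0 y) :=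
    (intervalIntegrable_iff_integrableOn_Ioc_of_le hy.le).1
      (intervalIntegral.intervalIntegrable_rpow' ha)
  rw [setLIntegral_congr Ioo_ae_eq_Ioc, ← ofReal_integral_eq_lintegral_ofReal hint
      (by filter_upwards [ae_restrict_mem measurableSet_Ioc] with x hx
          exact Real.rpow_nonneg hx.1.le a),
    ← intervalIntegral.integral_of_le hy.le, integral_rpow (Or.inl ha),
    Real.zero_rpow (by linarith), sub_zero]

theorem lintegral_Ioi_mul_lintegral_Ioi_comm {g h : ℝ → ℝ≥0∞} (hg : Measurable g)
    (hh : Measurable h) (a : ℝ) :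
    ∫⁻ x in Set.Ioi a, g x * ∫⁻ y in Set.Ioi x, h y
      = ∫⁻ y in Set.Ioi a, h y * ∫⁻ x in Set.Ioo a y, g x := by
  set μ := volume.restrict (Set.Ioi a)
  set F : ℝ → ℝ → ℝ≥0∞ := fun x y => if x < y then g x * h y else 0
  have hF : Measurable (Function.uncurry F) :=
    Measurable.ite (measurableSet_lt measurable_fst measurable_snd)
      ((hg.comp measurable_fst).mul (hh.comp measurable_snd)) measurable_const
  have inner_y : ∀ x ∈ Set.Ioi a, ∫⁻ y, F x y ∂μ = g x * ∫⁻ y in Set.Ioi x, h y := by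
    intro x hx
    have : F x = (Set.Ioi x).indicator fun y => g x * h y := by
      ext y; simp [F, Set.indicator_apply]
    rw [this, lintegral_indicator measurableSet_Ioi, Measure.restrict_restrict measurableSet_Ioi,
      Set.inter_eq_self_of_subset_left (Set.Ioi_subset_Ioi (le_of_lt hx)),
      lintegral_const_mul _ hh]
  have inner_x : ∀ y ∈ Set.Ioi a, ∫⁻ x, F x y ∂μ = h y * ∫⁻ x in Set.Ioo a y, g x := by
    intro y _
    have : (F · y) = (Set.Iio y).indicator fun x => g x * h y := by
      ext x; simp [F, Set.indicator_apply]
    rw [this, lintegral_indicator measurableSet_Iio, Measure.restrict_restrict measurableSet_Iio,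
      Set.Iio_inter_Ioi, lintegral_mul_const _ hg, mul_comm]
  calc ∫⁻ x in Set.Ioi a, g x * ∫⁻ y in Set.Ioi x, h y
      = ∫⁻ x, ∫⁻ y, F x y ∂μ ∂μ := (setLIntegral_congr_fun measurableSet_Ioi inner_y).symm
    _ = ∫⁻ y, ∫⁻ x, F x y ∂μ ∂μ := lintegral_lintegral_swap hF.aemeasurable
    _ = ∫⁻ y in Set.Ioi a, h y * ∫⁻ x in Set.Ioo a y, g x :=
        setLIntegral_congr_fun measurableSet_Ioi inner_x

theorem lintegral_Ioi_rpow_mul_lintegral_Ioi {h : ℝ → ℝ≥0∞} (hh : Measurable h) {a : ℝ}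
    (ha : -1 < a) :
    ∫⁻ x in Set.Ioi 0, ENNReal.ofReal (x ^ a) * ∫⁻ y in Set.Ioi x, h y
      = ∫⁻ y in Set.Ioi 0, h y * ENNReal.ofReal (y ^ (a + 1) / (a + 1)) := by
  rw [lintegral_Ioi_mul_lintegral_Ioi_comm (by fun_prop) hh]
  exact setLIntegral_congr_fun measurableSet_Ioi fun y hy => by
    rw [lintegral_Ioo_zero_rpow_of_lt ha hy]

theorem lintegral_Ioi_rpow_mul_rpow_le {f : ℝ → ℝ≥0∞} (hf : Measurable f) {p r x : ℝ}
    (hp : 1 ≤ p) (hr : 0 < r) (hx : 0 < x) :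
    (∫⁻ y in Set.Ioi x, f y) ^ p * ENNReal.ofReal (x ^ (r - 1)) ≤
      ENNReal.ofReal ((p / r) ^ (p - 1)) * (ENNReal.ofReal (x ^ (r / p - 1)) *
        ∫⁻ y in Set.Ioi x, f y ^ p * ENNReal.ofReal (y ^ ((p - 1) * (r / p + 1)))) := by
  have hp0 : 0 < p := by linarith
  have hrp : 0 < r / p := div_pos hr hp0
  have hweights : ∀ᵐ y ∂volume.restrict (Set.Ioi x),
      ENNReal.ofReal (y ^ ((p - 1) * (r / p + 1))) ^ p⁻¹ *
        ENNReal.ofReal (y ^ (-(r / p + 1))) ^ (1 - p⁻¹) = 1 := by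
    filter_upwards [ae_restrict_mem measurableSet_Ioi] with y hy
    have hy0 : 0 < y := hx.trans hy
    rw [ENNReal.ofReal_rpow_of_pos (by positivity), ENNReal.ofReal_rpow_of_pos (by positivity),
      ← Real.rpow_mul hy0.le, ← Real.rpow_mul hy0.le, ← ENNReal.ofReal_mul (by positivity),
      ← Real.rpow_add hy0]
    rw [show (p - 1) * (r / p + 1) * p⁻¹ + -(r / p + 1) * (1 - p⁻¹) = 0 by field_simp; ring,
      Real.rpow_zero, ENNReal.ofReal_one]
  have htail : ∫⁻ y in Set.Ioi x, ENNReal.ofReal (y ^ (-(r / p + 1)))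
      = ENNReal.ofReal (p / r * x ^ (-(r / p))) := by
    rw [lintegral_Ioi_rpow_of_lt (by linarith) hx, show -(r / p + 1) + 1 = -(r / p) by ring]
    congr 1
    field_simp
  have holder := lintegral_rpow_le_of_holder_weights hf.aemeasurable
    (by fun_prop) (by fun_prop) hp hweights
  rw [htail, ENNReal.ofReal_rpow_of_nonneg (by positivity) (by linarith)] at holder
  calc (∫⁻ y in Set.Ioi x, f y) ^ p * ENNReal.ofReal (x ^ (r - 1))
      ≤ (∫⁻ y in Set.Ioi x, f y ^ p * ENNReal.ofReal (y ^ ((p - 1) * (r / p + 1)))) *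
          ENNReal.ofReal ((p / r * x ^ (-(r / p))) ^ (p - 1)) * ENNReal.ofReal (x ^ (r - 1)) :=
        mul_le_mul_left holder _
    _ = _ := by
      rw [mul_assoc, mul_comm, ← ENNReal.ofReal_mul (by positivity), ← mul_assoc,
        ← ENNReal.ofReal_mul (by positivity)]
      congr 2
      rw [Real.mul_rpow (by positivity) (by positivity), ← Real.rpow_mul hx.le, mul_assoc,
        ← Real.rpow_add hx, show -(r / p) * (p - 1) + (r - 1) = r / p - 1 by field_simp; ring]

theorem hardy_integrand_eq {p r y : ℝ} (hp : 0 < p) (hr : 0 < r) (hy : 0 < y) (c : ℝ≥0∞) :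
    ENNReal.ofReal ((p / r) ^ (p - 1)) * (c ^ p * ENNReal.ofReal (y ^ ((p - 1) * (r / p + 1))) *
      ENNReal.ofReal (y ^ (r / p) / (r / p)))
      = ENNReal.ofReal ((p / r) ^ p) *
          ((ENNReal.ofReal y * c) ^ p * ENNReal.ofReal (y ^ (r - 1))) := by
  have hpr : 0 < p / r := div_pos hp hr
  have key : (p / r) ^ (p - 1) * (y ^ ((p - 1) * (r / p + 1)) * (y ^ (r / p) / (r / p)))
      = (p / r) ^ p * (y ^ p * y ^ (r - 1)) := by
    rw [← Real.rpow_add hy, show p + (r - 1) = (p - 1) * (r / p + 1) + r / p by field_simp; ring,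
      Real.rpow_add hy, Real.rpow_sub_one hpr.ne']
    field_simp
  rw [ENNReal.mul_rpow_of_nonneg _ _ hp.le, ENNReal.ofReal_rpow_of_pos hy]
  calc _ = c ^ p * ENNReal.ofReal ((p / r) ^ (p - 1) *
          (y ^ ((p - 1) * (r / p + 1)) * (y ^ (r / p) / (r / p)))) := by
        rw [ENNReal.ofReal_mul (by positivity), ENNReal.ofReal_mul (by positivity)]
        ring
    _ = c ^ p * ENNReal.ofReal ((p / r) ^ p * (y ^ p * y ^ (r - 1))) := by rw [key]
    _ = ENNReal.ofReal ((p / r) ^ p) * (ENNReal.ofReal (y ^ p) * c ^ p *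
          ENNReal.ofReal (y ^ (r - 1))) := by
        rw [ENNReal.ofReal_mul (by positivity), ENNReal.ofReal_mul (by positivity)]
        ring

theorem hardy_inequality_second (f : ℝ → ℝ≥0∞) (hf : Measurable f) (p r : ℝ)
    (hp : 1 ≤ p) (hr : 0 < r) :
    (∫⁻ x in Set.Ioi (0 : ℝ),
        (∫⁻ y in Set.Ioi x, f y) ^ p * ENNReal.ofReal (x ^ (r - 1))) ≤
      ENNReal.ofReal ((p / r) ^ p) *
        ∫⁻ y in Set.Ioi (0 : ℝ),
          (ENNReal.ofReal y * f y) ^ p * ENNReal.ofReal (y ^ (r - 1)) := by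
  have hp0 : 0 < p := by linarith
  have hh : Measurable fun y : ℝ => f y ^ p * ENNReal.ofReal (y ^ ((p - 1) * (r / p + 1))) := by
    fun_prop
  calc (∫⁻ x in Set.Ioi (0 : ℝ), (∫⁻ y in Set.Ioi x, f y) ^ p * ENNReal.ofReal (x ^ (r - 1)))
      ≤ ∫⁻ x in Set.Ioi (0 : ℝ), ENNReal.ofReal ((p / r) ^ (p - 1)) *
          (ENNReal.ofReal (x ^ (r / p - 1)) *
            ∫⁻ y in Set.Ioi x, f y ^ p * ENNReal.ofReal (y ^ ((p - 1) * (r / p + 1)))) :=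
        setLIntegral_mono' measurableSet_Ioi fun _ hx =>
          lintegral_Ioi_rpow_mul_rpow_le hf hp hr hx
    _ = ENNReal.ofReal ((p / r) ^ (p - 1)) * ∫⁻ y in Set.Ioi (0 : ℝ),
          f y ^ p * ENNReal.ofReal (y ^ ((p - 1) * (r / p + 1))) *
            ENNReal.ofReal (y ^ (r / p) / (r / p)) := by
      rw [lintegral_const_mul' _ _ ENNReal.ofReal_ne_top,
        lintegral_Ioi_rpow_mul_lintegral_Ioi hh (by linarith [div_pos hr hp0]), sub_add_cancel]
    _ = _ := by
      rw [← lintegral_const_mul' _ _ ENNReal.ofReal_ne_top,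
        ← lintegral_const_mul' _ _ ENNReal.ofReal_ne_top]
      exact setLIntegral_congr_fun measurableSet_Ioi fun y hy =>
        hardy_integrand_eq hp0 hr hy (f y)
end
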